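/- arXiv:math/0401057 — 3 statements merged into one kernel-verified Lean document; each statement's English description precedes it below -/
import Mathlib

section
/- For every natural number m and all real numbers x, y, z, one has (x+(m+1)z+1) · Σ_{n=0}^{m} (-1)^n · C(x+y+nz, m-n) · C(y+n(z+1), n) = (z+1) · Σ_{0≤l≤n≤m} (-1)^n · C(n,l) · C(x+l+1, m-n) · (1+z)^{n+l} · (1-z)^{n-l} + (x-m) · C(x,m). -/
open Finset PowerSeries

/-- Generalized binomial coefficient `C(x, k) = x(x-1)⋯(x-k+1)/k!` for real `x`. -/
noncomputable def gchoose (x : ℝ) (k : ℕ) : ℝ :=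
  (∏ i ∈ Finset.range k, (x - i)) / (Nat.factorial k)

/-- The binomial series `(1+t)^x = Σ C(x,k) t^k` as a formal power series. -/
noncomputable def binomSeries (x : ℝ) : PowerSeries ℝ :=
  PowerSeries.mk fun k => gchoose x k

/-!
Put `c = -(z + 1)`. Whatever `y` is, the alternating sum on the left is the coefficient of `t ^ m`
in `(1 + t) ^ x / (1 - c t)`. Indeed, absorption gives recursions in `j` for the sums
`Σₙ (-1) ^ n C(v + n z, j - n) C(u + n (z + 1), n)` and their first moments in `n` (shifting
`(u, v)` to `(u + z, v + z)`), and these recursions are matched by the coefficients of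
`(1 + t) ^ (v - u) / (1 - c t)` and `t (1 + t) ^ (v - u) / (1 - c t) ^ 2`.
The double sum on the right is the coefficient of `t ^ m` in `(1 + t) ^ (x + 1) Σₙ (-w) ^ n` with
`w = (1 + z) t (2 + (1 + z) t)`; since `1 + w = (1 - c t) ^ 2`, this is the coefficient of `t ^ m`
in `(1 + t) ^ (x + 1) / (1 - c t) ^ 2`. The identity is then a linear relation between coefficients
of these two series, which follows from their first-order recursions and
`(k + 1) C(x, k + 1) = (x - k) C(x, k)`.
-/

namespace SunWu

section Geometric

variable {R : Type*} [CommRing R]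

noncomputable def geomSeries (c : R) : R⟦X⟧ := PowerSeries.mk (c ^ ·)

theorem geomSeries_eq_one_add (c : R) : geomSeries c = 1 + C c * X * geomSeries c := by
  ext (_ | n) <;> simp [geomSeries, mul_assoc, coeff_succ_X_mul, pow_succ']

theorem geomSeries_mul_one_sub (c : R) : geomSeries c * (1 - C c * X) = 1 := by
  linear_combination geomSeries_eq_one_add c

theorem coeff_mul_geom_sum_neg {F g w : R⟦X⟧} (hg : g * (1 + w) = 1) (hw : X ∣ w) (m : ℕ) :
    coeff m (F * ∑ n ∈ range (m + 1), (-w) ^ n) = coeff m (F * g) := by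
  obtain ⟨v, rfl⟩ := hw
  have hgeom :
      ∑ n ∈ range (m + 1), (-(X * v)) ^ n = g - X ^ (m + 1) * (g * (-v) ^ (m + 1)) := by
    linear_combination g * geom_sum_mul_neg (-(X * v)) (m + 1)
      - (∑ n ∈ range (m + 1), (-(X * v)) ^ n) * hg
  rw [hgeom, mul_sub, map_sub, mul_left_comm, coeff_X_pow_mul', if_neg (by omega), sub_zero]

end Geometric

section Binomial

variable {R : Type*} [CommRing R] [BinomialRing R]

theorem succ_mul_choose_succ (a : R) (k : ℕ) :
    (k + 1) * Ring.choose a (k + 1) = (a - k) * Ring.choose a k := by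
  simpa [Nat.choose_succ_self_right, mul_comm] using Ring.choose_smul_choose a (Nat.le_succ k)

theorem succ_mul_choose_succ' (a : R) (k : ℕ) :
    (k + 1) * Ring.choose a (k + 1) = a * Ring.choose (a - 1) k := by
  simpa using Ring.choose_smul_choose a (Nat.le_add_left 1 k)

theorem eq_of_succ_mul_eq {a b : R} (j : ℕ) (h : (j + 1 : R) * a = (j + 1) * b) : a = b := by
  have := BinomialRing.toIsAddTorsionFree (R := R)
  refine IsAddTorsionFree.nsmul_right_injective j.succ_ne_zero ?_
  simpa [nsmul_eq_mul] using h

@[simp] theorem coeff_binomialSeries (d : R) (n : ℕ) :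
    coeff n (binomialSeries R d) = Ring.choose d n := by
  simp

noncomputable def geomBinomCoeff (c d : R) (j : ℕ) : R :=
  coeff j (geomSeries c * binomialSeries R d)

-- The factor `X` makes the recursion `geomSqBinomCoeff_succ` hold from `j = 0` on.
noncomputable def geomSqBinomCoeff (c d : R) (j : ℕ) : R :=
  coeff j (X * geomSeries c ^ 2 * binomialSeries R d)

@[simp] theorem geomBinomCoeff_zero (c d : R) : geomBinomCoeff c d 0 = 1 := by
  simp [geomBinomCoeff, geomSeries]

theorem geomBinomCoeff_succ (c d : R) (j : ℕ) :
    geomBinomCoeff c d (j + 1) = Ring.choose d (j + 1) + c * geomBinomCoeff c d j := by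
  rw [geomBinomCoeff, geomSeries_eq_one_add, add_mul, one_mul, map_add, mul_assoc, mul_assoc,
    coeff_C_mul, coeff_succ_X_mul, coeff_binomialSeries, geomBinomCoeff]

@[simp] theorem geomSqBinomCoeff_zero (c d : R) : geomSqBinomCoeff c d 0 = 0 := by
  simp [geomSqBinomCoeff]

theorem geomSqBinomCoeff_succ (c d : R) (j : ℕ) :
    geomSqBinomCoeff c d (j + 1) = geomBinomCoeff c d j + c * geomSqBinomCoeff c d j := by
  have h : X * geomSeries c ^ 2 * binomialSeries R d = X * (geomSeries c * binomialSeries R d)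
      + C c * (X * (X * geomSeries c ^ 2 * binomialSeries R d)) := by
    nth_rw 1 [sq, geomSeries_eq_one_add]
    ring
  rw [geomSqBinomCoeff, h, map_add, coeff_C_mul, coeff_succ_X_mul, coeff_succ_X_mul,
    geomBinomCoeff, geomSqBinomCoeff]

theorem geomSqBinomCoeff_add_one (c d : R) (j : ℕ) :
    geomSqBinomCoeff c (d + 1) (j + 1)
      = geomSqBinomCoeff c d (j + 1) + geomSqBinomCoeff c d j := by
  have h : X * geomSeries c ^ 2 * binomialSeries R (d + 1)
      = X * geomSeries c ^ 2 * binomialSeries R d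
        + X * (X * geomSeries c ^ 2 * binomialSeries R d) := by
    rw [binomialSeries_add, ← Nat.cast_one, binomialSeries_nat]
    ring
  rw [geomSqBinomCoeff, h, map_add, coeff_succ_X_mul, geomSqBinomCoeff, geomSqBinomCoeff]

theorem succ_mul_geomBinomCoeff_succ (c d : R) (j : ℕ) :
    (j + 1) * geomBinomCoeff c d (j + 1)
      = (d - j + c) * geomBinomCoeff c d j + c * (c + 1) * geomSqBinomCoeff c d j := by
  induction j with
  | zero => simp [geomBinomCoeff_succ]
  | succ j ih =>
    have habs := succ_mul_choose_succ d (j + 1)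
    push_cast at habs ⊢
    linear_combination c * ih + habs + (j + 2) * geomBinomCoeff_succ c d (j + 1)
      - (d - j - 1) * geomBinomCoeff_succ c d j - c * (c + 1) * geomSqBinomCoeff_succ c d j

def altTerm (z u v : R) (n k : ℕ) : R :=
  (-1) ^ n * Ring.choose (v + n * z) k * Ring.choose (u + n * (z + 1)) n

def altSum (z u v : R) (j : ℕ) : R :=
  ∑ p ∈ antidiagonal j, altTerm z u v p.1 p.2

def altMoment (z u v : R) (j : ℕ) : R :=
  ∑ p ∈ antidiagonal j, p.1 * altTerm z u v p.1 p.2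

@[simp] theorem altSum_zero (z u v : R) : altSum z u v 0 = 1 := by
  simp [altSum, altTerm]

@[simp] theorem altMoment_zero (z u v : R) : altMoment z u v 0 = 0 := by
  simp [altMoment]

theorem succ_mul_altTerm_succ (z u v : R) (n k : ℕ) :
    (n + 1) * altTerm z u v (n + 1) k
      = -(u + z + 1 + (z + 1) * n) * altTerm z (u + z) (v + z) n k := by
  have habs := succ_mul_choose_succ' (u + (n + 1 : ℕ) * (z + 1)) n
  rw [show u + (n + 1 : ℕ) * (z + 1) - 1 = u + z + n * (z + 1) by push_cast; ring] at habs
  simp only [altTerm]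
  rw [show v + (n + 1 : ℕ) * z = v + z + n * z by push_cast; ring]
  push_cast at habs ⊢
  linear_combination (-1) ^ (n + 1) * Ring.choose (v + z + n * z) k * habs

theorem succ_mul_altTerm (z u v : R) (n k : ℕ) :
    (k + 1) * altTerm z u v n (k + 1) = (v + n * z - k) * altTerm z u v n k := by
  simp only [altTerm]
  linear_combination (-1) ^ n * Ring.choose (u + n * (z + 1)) n * succ_mul_choose_succ (v + n * z) k

theorem altMoment_succ (z u v : R) (j : ℕ) :
    altMoment z u v (j + 1)
      = -(u + z + 1) * altSum z (u + z) (v + z) j - (z + 1) * altMoment z (u + z) (v + z) j := by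
  rw [altMoment, Nat.sum_antidiagonal_succ, altSum, altMoment, mul_sum, mul_sum,
    ← sum_sub_distrib]
  simp only [Nat.cast_zero, zero_mul, zero_add, Nat.cast_add, Nat.cast_one]
  refine sum_congr rfl fun p _ => ?_
  linear_combination succ_mul_altTerm_succ z u v p.1 p.2

theorem succ_mul_altSum_succ (z u v : R) (j : ℕ) :
    (j + 1) * altSum z u v (j + 1)
      = (v - j) * altSum z u v j + (z + 1) * altMoment z u v j + altMoment z u v (j + 1) := by
  have hsecond : (j + 1) * altSum z u v (j + 1) - altMoment z u v (j + 1)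
      = ∑ p ∈ antidiagonal (j + 1), (p.2 : R) * altTerm z u v p.1 p.2 := by
    rw [altSum, altMoment, mul_sum, ← sum_sub_distrib]
    refine sum_congr rfl fun p hp => ?_
    rw [HasAntidiagonal.mem_antidiagonal] at hp
    have hp' : (p.1 : R) + p.2 = j + 1 := by exact_mod_cast congrArg (Nat.cast (R := R)) hp
    rw [← sub_mul, ← hp', add_sub_cancel_left]
  have hshift : ∑ p ∈ antidiagonal (j + 1), (p.2 : R) * altTerm z u v p.1 p.2
      = (v - j) * altSum z u v j + (z + 1) * altMoment z u v j := by
    rw [Nat.sum_antidiagonal_succ', altSum, altMoment, mul_sum, mul_sum, ← sum_add_distrib]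
    simp only [Nat.cast_zero, zero_mul, zero_add, Nat.cast_add, Nat.cast_one]
    refine sum_congr rfl fun p hp => ?_
    rw [HasAntidiagonal.mem_antidiagonal] at hp
    rw [succ_mul_altTerm, ← hp]
    push_cast
    ring
  linear_combination hsecond + hshift

theorem altSum_eq_geomBinomCoeff_and_altMoment_sub (z : R) (j : ℕ) : ∀ u v : R,
    altSum z u v j = geomBinomCoeff (-(z + 1)) (v - u) j ∧
      altMoment z u v j - altMoment z (u + z) (v + z) j
        = z * geomSqBinomCoeff (-(z + 1)) (v - u) j := by
  induction j with
  | zero => simp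
  | succ j ih =>
    intro u v
    obtain ⟨hs₀, hm₀⟩ := ih u v
    obtain ⟨hs₁, hm₁⟩ := ih (u + z) (v + z)
    obtain ⟨hs₂, -⟩ := ih (u + z + z) (v + z + z)
    simp only [add_sub_add_right_eq_sub] at hs₁ hm₁ hs₂
    have hm : altMoment z u v (j + 1) - altMoment z (u + z) (v + z) (j + 1)
        = z * geomSqBinomCoeff (-(z + 1)) (v - u) (j + 1) := by
      rw [altMoment_succ, altMoment_succ, geomSqBinomCoeff_succ, hs₁, hs₂]
      linear_combination (-(z + 1)) * hm₁
    refine ⟨eq_of_succ_mul_eq j ?_, hm⟩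
    rw [succ_mul_altSum_succ, altMoment_succ, succ_mul_geomBinomCoeff_succ, hs₀, hs₁]
    linear_combination (z + 1) * hm₀

theorem altSum_eq_geomBinomCoeff (z u v : R) (j : ℕ) :
    altSum z u v j = geomBinomCoeff (-(z + 1)) (v - u) j :=
  (altSum_eq_geomBinomCoeff_and_altMoment_sub z j u v).1

theorem coeff_binomialSeries_mul_pow (d a b : R) (n k : ℕ) :
    coeff k (binomialSeries R d * (C a * (1 + X) + C b) ^ n)
      = ∑ l ∈ range (n + 1),
          (n.choose l : R) * Ring.choose (d + l) k * a ^ l * b ^ (n - l) := by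
  have hexpand : binomialSeries R d * (C a * (1 + X) + C b) ^ n = ∑ l ∈ range (n + 1),
      C ((n.choose l : R) * a ^ l * b ^ (n - l)) * binomialSeries R (d + l) := by
    rw [add_pow, mul_sum]
    refine sum_congr rfl fun l _ => ?_
    rw [binomialSeries_add, binomialSeries_nat, mul_pow]
    simp only [map_mul, map_pow, map_natCast]
    ring
  rw [hexpand, map_sum]
  refine sum_congr rfl fun l _ => ?_
  rw [coeff_C_mul, coeff_binomialSeries]
  ring

theorem sum_sum_eq_geomSqBinomCoeff (x z : R) (m : ℕ) :
    ∑ n ∈ range (m + 1), ∑ l ∈ range (n + 1), (-1 : R) ^ n * (n.choose l : R) *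
        Ring.choose (x + l + 1) (m - n) * (1 + z) ^ (n + l) * (1 - z) ^ (n - l)
      = geomSqBinomCoeff (-(z + 1)) (x + 1) (m + 1) := by
  set P : R⟦X⟧ := C (1 + z) * (1 + X) + C (1 - z)
  set w : R⟦X⟧ := C (1 + z) * X * P
  have hterm : ∀ n ∈ range (m + 1), ∑ l ∈ range (n + 1), (-1 : R) ^ n * (n.choose l : R) *
      Ring.choose (x + l + 1) (m - n) * (1 + z) ^ (n + l) * (1 - z) ^ (n - l)
        = coeff m (binomialSeries R (x + 1) * (-w) ^ n) := by
    intro n hn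
    have hnm : n ≤ m := Nat.lt_succ_iff.mp (mem_range.mp hn)
    rw [show binomialSeries R (x + 1) * (-w) ^ n
        = X ^ n * (C ((-1) ^ n * (1 + z) ^ n) * (binomialSeries R (x + 1) * P ^ n)) by
      rw [neg_pow, mul_pow, mul_pow, map_mul, map_pow, map_pow, map_neg, map_one]; ring]
    rw [coeff_X_pow_mul', if_pos hnm, coeff_C_mul, coeff_binomialSeries_mul_pow, mul_sum]
    refine sum_congr rfl fun l _ => ?_
    rw [show x + l + 1 = x + 1 + l by ring]
    ring
  have hinv : geomSeries (-(z + 1)) ^ 2 * (1 + w) = 1 := by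
    have hsq : 1 + w = (1 - C (-(z + 1)) * X) ^ 2 := by
      simp only [w, P, map_neg, map_add, map_sub, map_one]
      ring
    rw [hsq, ← mul_pow, geomSeries_mul_one_sub, one_pow]
  rw [sum_congr rfl hterm, ← map_sum, ← mul_sum,
    coeff_mul_geom_sum_neg hinv ⟨C (1 + z) * P, by ring⟩, geomSqBinomCoeff, mul_assoc,
    coeff_succ_X_mul, mul_comm]

theorem mul_geomBinomCoeff_eq_geomSqBinomCoeff (x z : R) (m : ℕ) :
    (x + (m + 1) * z + 1) * geomBinomCoeff (-(z + 1)) x m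
      = (z + 1) * geomSqBinomCoeff (-(z + 1)) (x + 1) (m + 1) + (x - m) * Ring.choose x m := by
  rw [geomSqBinomCoeff_add_one, geomSqBinomCoeff_succ]
  linear_combination (m + 1) * geomBinomCoeff_succ (-(z + 1)) x m + succ_mul_choose_succ x m
    - succ_mul_geomBinomCoeff_succ (-(z + 1)) x m

end Binomial

end SunWu

theorem gchoose_eq_choose (x : ℝ) (k : ℕ) : gchoose x k = Ring.choose x k := by
  rw [Ring.choose_eq_smul, ← Polynomial.aeval_eq_smeval, ← Polynomial.eval_map_algebraMap,
    descPochhammer_map, descPochhammer_eval_eq_prod_range, gchoose, smul_eq_mul, div_eq_inv_mul]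

open SunWu in
theorem sun_wu_extension' (m : ℕ) (x y z : ℝ) :
    (x + (m + 1) * z + 1) *
        ∑ n ∈ Finset.range (m + 1),
          (-1 : ℝ) ^ n * gchoose (x + y + n * z) (m - n) * gchoose (y + n * (z + 1)) n =
      (z + 1) * ∑ n ∈ Finset.range (m + 1), ∑ l ∈ Finset.range (n + 1),
            (-1 : ℝ) ^ n * (n.choose l : ℝ) * gchoose (x + l + 1) (m - n) *
              (1 + z) ^ (n + l) * (1 - z) ^ (n - l) +
        (x - m) * gchoose x m := by
  simp only [gchoose_eq_choose]
  have hleft : ∑ n ∈ range (m + 1), (-1 : ℝ) ^ n * Ring.choose (x + y + n * z) (m - n) *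
      Ring.choose (y + n * (z + 1)) n = altSum z y (x + y) m :=
    (Nat.sum_antidiagonal_eq_sum_range_succ (fun n k => altTerm z y (x + y) n k) m).symm
  rw [hleft, altSum_eq_geomBinomCoeff, add_sub_cancel_right, sum_sum_eq_geomSqBinomCoeff]
  exact mul_geomBinomCoeff_eq_geomSqBinomCoeff x z m
end

section
/- For every natural number m and all real numbers x and y, one has (x+m+2) · Σ_{n=0}^{m} (-1)^n · C(x+y+n, m-n) · C(y+2n, n) = 2 · Σ_{n=0}^{m} C(x+n+1, m-n) · (-4)^n + (x-m) · C(x,m). -/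
open Finset PowerSeries

/-!
Every sum involved has the form `∑ₙ cₙ C(x + aₙ, m - n)`, so it obeys Pascal's rule
`F (m+1) (x+1) = F (m+1) x + F m x`. A family of polynomial functions obeying this rule is
determined by `F 0` and the values `F m 0`, since these determine all values at natural `x`.

In generating-function terms the left-hand sum is `[tᵐ] (1+t)^x / (1+2t)`, whatever `y` is.
Elementarily: Pascal's rule in `x`, combined with Pascal's rule for the factor `C(y + 2n, n)`,
makes the sum `1`-periodic in `y`, hence constant in `y`; at `y = 0` it is identified with
`g m x = ∑ₙ (-2)ⁿ C(x, m - n)` (`negTwoSum`) through the evaluation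
`∑ₙ (-1)ⁿ C(2n, n) C(n, m - n) = (-2)ᵐ`. The right-hand sum `T m x` (`negFourSum`) is
`[tᵐ] (1+t)^(x+1) / (1+2t)²`, and `2 T m x = (x - m) g m x - (m + 1) g (m + 1) x` follows from
the same uniqueness principle. The identity then comes from `g (m+1) x = C(x, m+1) - 2 g m x`
and `(m+1) C(x, m+1) = (x - m) C(x, m)`.
-/

lemma gchoose_zero_right (x : ℝ) : gchoose x 0 = 1 := by
  simp [gchoose]

lemma gchoose_zero_succ (k : ℕ) : gchoose 0 (k + 1) = 0 := by
  simp [gchoose, Finset.prod_range_succ']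

lemma gchoose_succ_succ (x : ℝ) (k : ℕ) :
    gchoose (x + 1) (k + 1) = gchoose x k + gchoose x (k + 1) := by
  have hprod : ∏ i ∈ range (k + 1), (x + 1 - i) = (x + 1) * ∏ i ∈ range k, (x - i) := by
    rw [prod_range_succ', mul_comm]
    push_cast
    simp only [sub_zero, add_sub_add_right_eq_sub]
  simp only [gchoose, hprod, prod_range_succ, Nat.factorial_succ]
  push_cast
  field_simp
  ring

lemma succ_mul_gchoose_succ (x : ℝ) (k : ℕ) :
    (k + 1) * gchoose x (k + 1) = (x - k) * gchoose x k := by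
  simp only [gchoose, prod_range_succ, Nat.factorial_succ]
  push_cast
  field_simp

lemma mul_gchoose_sub_one (x : ℝ) (k : ℕ) :
    x * gchoose (x - 1) k = (x - k) * gchoose x k := by
  have h := gchoose_succ_succ (x - 1) k
  rw [sub_add_cancel] at h
  linear_combination succ_mul_gchoose_succ x k - (k + 1) * h - succ_mul_gchoose_succ (x - 1) k

lemma succ_mul_gchoose_central (n : ℕ) :
    (n + 1) * gchoose (2 * (n + 1)) (n + 1) = 2 * (2 * n + 1) * gchoose (2 * n) n := by
  linear_combination (norm := ring_nf) succ_mul_gchoose_succ (2 * n + 2) n -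
    mul_gchoose_sub_one (2 * n + 2) n - 2 * mul_gchoose_sub_one (2 * n + 1) n

lemma sum_neg_one_pow_mul_gchoose_central (m : ℕ) :
    ∑ n ∈ range (m + 1), (-1 : ℝ) ^ n * gchoose (2 * n) n * gchoose n (m - n) = (-2) ^ m := by
  induction m with
  | zero => simp [gchoose_zero_right]
  | succ m ih =>
    -- `(m + 1) (b (m + 1) + 2 b m)` telescopes, `b` being the sum on the left
    let Γ : ℕ → ℝ := fun n => -n * (-1) ^ n * gchoose (2 * n) n * gchoose (n - 1) (m + 1 - n)
    have hstep : ∀ n ∈ range (m + 1),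
        (m + 1) * ((-1) ^ n * gchoose (2 * n) n * gchoose n (m + 1 - n)) +
          2 * (m + 1) * ((-1) ^ n * gchoose (2 * n) n * gchoose n (m - n)) = Γ (n + 1) - Γ n := by
      intro n hn
      obtain ⟨J, rfl⟩ : ∃ J, m = n + J := ⟨m - n, by have := mem_range.mp hn; omega⟩
      simp only [Γ]
      rw [show n + J + 1 - n = J + 1 by omega, show n + J + 1 - (n + 1) = J by omega,
        Nat.add_sub_cancel_left]
      push_cast
      rw [add_sub_cancel_right]
      have hshift := mul_gchoose_sub_one n (J + 1)
      push_cast at hshift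
      linear_combination (-(-1) ^ n * gchoose n J) * succ_mul_gchoose_central n -
        ((-1) ^ n * gchoose (2 * n) n) * hshift +
        (2 * (-1) ^ n * gchoose (2 * n) n) * succ_mul_gchoose_succ n J
    have htel := sum_range_sub Γ (m + 1)
    rw [← sum_congr rfl hstep, sum_add_distrib, ← mul_sum, ← mul_sum, ih] at htel
    simp only [Γ, Nat.sub_self, gchoose_zero_right, CharP.cast_eq_zero, neg_zero, zero_mul,
      sub_zero] at htel
    rw [sum_range_succ, Nat.sub_self, gchoose_zero_right]
    refine mul_left_cancel₀ (Nat.cast_add_one_ne_zero m) ?_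
    push_cast at htel ⊢
    linear_combination htel

@[fun_prop]
def IsPolyFun {R : Type*} [CommRing R] (f : R → R) : Prop :=
  ∃ p : Polynomial R, ∀ x, f x = p.eval x

namespace IsPolyFun

section CommRing
variable {R : Type*} [CommRing R]

@[fun_prop] lemma id : IsPolyFun (fun x : R => x) := ⟨Polynomial.X, by simp⟩

@[fun_prop] lemma const (c : R) : IsPolyFun (fun _ : R => c) := ⟨Polynomial.C c, by simp⟩

@[fun_prop] lemma add {f g : R → R} :
    IsPolyFun f → IsPolyFun g → IsPolyFun (fun x => f x + g x)
  | ⟨p, hp⟩, ⟨q, hq⟩ => ⟨p + q, by simp [hp, hq]⟩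

@[fun_prop] lemma sub {f g : R → R} :
    IsPolyFun f → IsPolyFun g → IsPolyFun (fun x => f x - g x)
  | ⟨p, hp⟩, ⟨q, hq⟩ => ⟨p - q, by simp [hp, hq]⟩

@[fun_prop] lemma mul {f g : R → R} :
    IsPolyFun f → IsPolyFun g → IsPolyFun (fun x => f x * g x)
  | ⟨p, hp⟩, ⟨q, hq⟩ => ⟨p * q, by simp [hp, hq]⟩

@[fun_prop] lemma comp {f g : R → R} :
    IsPolyFun f → IsPolyFun g → IsPolyFun (fun x => f (g x))
  | ⟨p, hp⟩, ⟨q, hq⟩ => ⟨p.comp q, by simp [hp, hq]⟩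

@[fun_prop] lemma sum {ι : Type*} (s : Finset ι) {f : ι → R → R}
    (hf : ∀ i ∈ s, IsPolyFun (f i)) : IsPolyFun (fun x => ∑ i ∈ s, f i x) := by
  classical
  induction s using Finset.induction_on with
  | empty => simpa using const 0
  | insert i s hi ih =>
    simp only [sum_insert hi]
    exact add (hf i (mem_insert_self i s)) (ih fun j hj => hf j (mem_insert_of_mem hj))

@[fun_prop] lemma prod {ι : Type*} (s : Finset ι) {f : ι → R → R}
    (hf : ∀ i ∈ s, IsPolyFun (f i)) : IsPolyFun (fun x => ∏ i ∈ s, f i x) := by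
  classical
  induction s using Finset.induction_on with
  | empty => simpa using const 1
  | insert i s hi ih =>
    simp only [prod_insert hi]
    exact mul (hf i (mem_insert_self i s)) (ih fun j hj => hf j (mem_insert_of_mem hj))

end CommRing

section CharZero
variable {R : Type*} [CommRing R] [IsDomain R] [CharZero R] {f g : R → R}

lemma eq_of_natCast (hf : IsPolyFun f) (hg : IsPolyFun g) (h : ∀ n : ℕ, f n = g n) : f = g := by
  obtain ⟨p, hp⟩ := hf
  obtain ⟨q, hq⟩ := hg
  have hpq : p = q := by
    refine Polynomial.eq_of_infinite_eval_eq p q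
      ((Set.infinite_range_of_injective Nat.cast_injective).mono ?_)
    rintro _ ⟨n, rfl⟩
    simp [← hp, ← hq, h n]
  funext x
  rw [hp, hq, hpq]

lemma eq_apply_zero_of_add_one (hf : IsPolyFun f) (h : ∀ x, f (x + 1) = f x) (x : R) :
    f x = f 0 := by
  refine congrFun (hf.eq_of_natCast (const (f 0)) fun n => ?_) x
  induction n with
  | zero => simp
  | succ n ih => rw [Nat.cast_succ, h, ih]

theorem eq_of_pascal {F G : ℕ → R → R} (hF : ∀ m, IsPolyFun (F m))
    (hG : ∀ m, IsPolyFun (G m))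
    (hF_succ : ∀ m x, F (m + 1) (x + 1) = F (m + 1) x + F m x)
    (hG_succ : ∀ m x, G (m + 1) (x + 1) = G (m + 1) x + G m x)
    (h_zero : ∀ n : ℕ, F 0 n = G 0 n) (h_at_zero : ∀ m, F m 0 = G m 0) (m : ℕ) (x : R) :
    F m x = G m x := by
  refine congrFun ((hF m).eq_of_natCast (hG m) fun n => ?_) x
  induction m generalizing n with
  | zero => exact h_zero n
  | succ m ihm =>
    induction n with
    | zero => simpa using h_at_zero (m + 1)
    | succ n ihn => push_cast; rw [hF_succ, hG_succ, ihn, ihm]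

end CharZero

end IsPolyFun

@[fun_prop] lemma IsPolyFun.gchoose (k : ℕ) : IsPolyFun (fun x => gchoose x k) := by
  unfold _root_.gchoose
  simp only [div_eq_mul_inv]
  fun_prop

noncomputable def shiftedChooseSum (c a : ℕ → ℝ) (m : ℕ) (x : ℝ) : ℝ :=
  ∑ n ∈ range (m + 1), c n * gchoose (x + a n) (m - n)

section shiftedChooseSum
variable (c a : ℕ → ℝ)

lemma shiftedChooseSum_zero (x : ℝ) : shiftedChooseSum c a 0 x = c 0 := by
  simp [shiftedChooseSum, gchoose_zero_right]

@[fun_prop] lemma isPolyFun_shiftedChooseSum (m : ℕ) : IsPolyFun (shiftedChooseSum c a m) := by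
  unfold shiftedChooseSum
  fun_prop

lemma shiftedChooseSum_succ_add_one (m : ℕ) (x : ℝ) :
    shiftedChooseSum c a (m + 1) (x + 1) =
      shiftedChooseSum c a (m + 1) x + shiftedChooseSum c a m x := by
  have hterm : ∀ n ∈ range (m + 1), c n * gchoose (x + 1 + a n) (m + 1 - n) =
      c n * gchoose (x + a n) (m + 1 - n) + c n * gchoose (x + a n) (m - n) := by
    intro n hn
    rw [Nat.sub_add_comm (Nat.lt_succ_iff.mp (mem_range.mp hn)), add_right_comm,
      gchoose_succ_succ]
    ring
  simp only [shiftedChooseSum]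
  rw [sum_range_succ, sum_range_succ _ (m + 1), sum_congr rfl hterm, sum_add_distrib]
  simp only [Nat.sub_self, gchoose_zero_right]
  ring

lemma shiftedChooseSum_succ_of_geometric {r s : ℝ} (hc : ∀ n, c (n + 1) = r * c n)
    (ha : ∀ n, a (n + 1) = a n + s) (m : ℕ) (x : ℝ) :
    shiftedChooseSum c a (m + 1) x =
      c 0 * gchoose (x + a 0) (m + 1) + r * shiftedChooseSum c a m (x + s) := by
  simp only [shiftedChooseSum]
  rw [sum_range_succ', add_comm, mul_sum]
  congr 1
  refine sum_congr rfl fun n _ => ?_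
  rw [hc, ha, Nat.add_sub_add_right, add_right_comm, ← add_assoc, mul_assoc]

end shiftedChooseSum

noncomputable def negTwoSum (m : ℕ) (x : ℝ) : ℝ :=
  shiftedChooseSum (fun n => (-2) ^ n) (fun _ => 0) m x

lemma negTwoSum_succ (m : ℕ) (x : ℝ) :
    negTwoSum (m + 1) x = gchoose x (m + 1) - 2 * negTwoSum m x := by
  have h := shiftedChooseSum_succ_of_geometric (fun n => (-2 : ℝ) ^ n) (fun _ => 0) (r := -2)
    (s := 0) (fun n => pow_succ' _ n) (fun _ => (add_zero 0).symm) m x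
  simp only [pow_zero, one_mul, add_zero] at h
  rw [negTwoSum, h, negTwoSum]
  ring

lemma negTwoSum_zero_right (m : ℕ) : negTwoSum m 0 = (-2) ^ m := by
  induction m with
  | zero => exact shiftedChooseSum_zero _ _ _ |>.trans (pow_zero _)
  | succ m ih => rw [negTwoSum_succ, ih, gchoose_zero_succ]; ring

noncomputable def negFourSum (m : ℕ) (x : ℝ) : ℝ :=
  shiftedChooseSum (fun n => (-4) ^ n) (fun n => n + 1) m x

lemma sum_eq_negFourSum (m : ℕ) (x : ℝ) :
    ∑ n ∈ range (m + 1), gchoose (x + n + 1) (m - n) * (-4 : ℝ) ^ n = negFourSum m x :=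
  sum_congr rfl fun n _ => by rw [add_assoc x]; ring

lemma negFourSum_succ (m : ℕ) (x : ℝ) :
    negFourSum (m + 1) x = gchoose (x + 1) (m + 1) - 4 * negFourSum m (x + 1) := by
  have h := shiftedChooseSum_succ_of_geometric (fun n => (-4 : ℝ) ^ n) (fun n => n + 1)
    (r := -4) (s := 1) (fun n => pow_succ' _ n) (fun n => by push_cast; ring) m x
  simp only [pow_zero, one_mul, Nat.cast_zero, zero_add] at h
  rw [negFourSum, h, negFourSum]
  ring

lemma two_mul_negFourSum_zero_right (m : ℕ) : 2 * negFourSum m 0 = (m + 2) * (-2) ^ m := by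
  induction m using Nat.twoStepInduction with
  | zero => simp [negFourSum, shiftedChooseSum_zero]
  | one =>
    rw [negFourSum_succ, negFourSum, shiftedChooseSum_zero, zero_add,
      ← zero_add (1 : ℝ), gchoose_succ_succ, gchoose_zero_right, gchoose_zero_succ]
    norm_num
  | more m ih₀ ih₁ =>
    have hpascal : negFourSum (m + 1) (0 + 1) = negFourSum (m + 1) 0 + negFourSum m 0 :=
      shiftedChooseSum_succ_add_one _ _ m 0
    rw [zero_add] at hpascal
    have hvanish : gchoose (0 + 1) (m + 2) = 0 := by
      rw [gchoose_succ_succ, gchoose_zero_succ, gchoose_zero_succ, add_zero]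
    rw [negFourSum_succ, hvanish, zero_add]
    push_cast at ih₁ ⊢
    linear_combination -8 * hpascal - 4 * ih₁ - 4 * ih₀

lemma two_mul_negFourSum (m : ℕ) (x : ℝ) :
    2 * negFourSum m x = (x - m) * negTwoSum m x - (m + 1) * negTwoSum (m + 1) x := by
  let W : ℕ → ℝ → ℝ := fun m x =>
    2 * negFourSum m x - (x - m) * negTwoSum m x + (m + 1) * negTwoSum (m + 1) x
  suffices W m x = 0 by linear_combination this
  refine IsPolyFun.eq_of_pascal (G := fun _ _ => 0) (fun m => ?_) (fun _ => IsPolyFun.const 0)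
    (fun m x => ?_) (fun _ _ => (add_zero 0).symm) (fun n => ?_) (fun m => ?_) m x
  · simp only [W, negFourSum, negTwoSum]
    fun_prop
  · have hT : negFourSum (m + 1) (x + 1) = negFourSum (m + 1) x + negFourSum m x :=
      shiftedChooseSum_succ_add_one _ _ m x
    have hg₁ : negTwoSum (m + 1) (x + 1) = negTwoSum (m + 1) x + negTwoSum m x :=
      shiftedChooseSum_succ_add_one _ _ m x
    have hg₂ : negTwoSum (m + 2) (x + 1) = negTwoSum (m + 2) x + negTwoSum (m + 1) x :=
      shiftedChooseSum_succ_add_one _ _ (m + 1) x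
    simp only [W]
    push_cast
    linear_combination 2 * hT - (x - m) * hg₁ + (m + 2) * hg₂
  · simp only [W, negTwoSum_succ]
    simp only [negFourSum, negTwoSum, shiftedChooseSum_zero]
    linear_combination succ_mul_gchoose_succ (n : ℝ) 0 + n * gchoose_zero_right n
  · simp only [W, negTwoSum_zero_right]
    linear_combination two_mul_negFourSum_zero_right m

noncomputable def curiousSum (m : ℕ) (x y : ℝ) : ℝ :=
  shiftedChooseSum (fun n => (-1) ^ n * gchoose (y + 2 * n) n) (fun n => y + n) m x

lemma sum_eq_curiousSum (m : ℕ) (x y : ℝ) :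
    ∑ n ∈ range (m + 1), (-1 : ℝ) ^ n * gchoose (x + y + n) (m - n) * gchoose (y + 2 * n) n =
      curiousSum m x y :=
  sum_congr rfl fun n _ => by rw [add_assoc x y]; ring

lemma curiousSum_succ_add_one (m : ℕ) (x y : ℝ) :
    curiousSum (m + 1) (x + 1) y = curiousSum (m + 1) x (y + 1) + curiousSum m x (y + 2) := by
  have hterm : ∀ j ∈ range (m + 1),
      (-1) ^ (j + 1) * gchoose (y + 2 * (j + 1 : ℕ)) (j + 1) *
          gchoose (x + 1 + (y + (j + 1 : ℕ))) (m + 1 - (j + 1)) =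
        (-1) ^ (j + 1) * gchoose (y + 1 + 2 * (j + 1 : ℕ)) (j + 1) *
          gchoose (x + (y + 1 + (j + 1 : ℕ))) (m + 1 - (j + 1)) +
        (-1) ^ j * gchoose (y + 2 + 2 * j) j * gchoose (x + (y + 2 + j)) (m - j) := by
    intro j _
    push_cast
    linear_combination (norm := ring_nf)
      (-1) ^ j * gchoose (x + y + j + 2) (m - j) * gchoose_succ_succ (y + 2 * j + 2) j
  simp only [curiousSum, shiftedChooseSum]
  rw [sum_range_succ' _ (m + 1), sum_range_succ' _ (m + 1), sum_congr rfl hterm, sum_add_distrib,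
    Nat.cast_zero, add_zero, add_zero, add_right_comm x, add_assoc x y, gchoose_zero_right,
    gchoose_zero_right]
  ring

lemma curiousSum_eq_curiousSum_zero (m : ℕ) (x y : ℝ) :
    curiousSum m x y = curiousSum m x 0 := by
  induction m generalizing x y with
  | zero => simp [curiousSum, shiftedChooseSum_zero, gchoose_zero_right]
  | succ m ih =>
    have hpoly : IsPolyFun (curiousSum (m + 1) x) := by
      unfold curiousSum shiftedChooseSum
      fun_prop
    refine hpoly.eq_apply_zero_of_add_one (fun y => ?_) y
    have hpascal : curiousSum (m + 1) (x + 1) y = curiousSum (m + 1) x y + curiousSum m x y :=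
      shiftedChooseSum_succ_add_one _ _ m x
    linear_combination hpascal - curiousSum_succ_add_one m x y + ih x y - ih x (y + 2)

lemma curiousSum_zero_zero (m : ℕ) : curiousSum m 0 0 = (-2) ^ m := by
  rw [← sum_neg_one_pow_mul_gchoose_central m]
  simp only [curiousSum, shiftedChooseSum, zero_add]

lemma curiousSum_eq_negTwoSum (m : ℕ) (x y : ℝ) : curiousSum m x y = negTwoSum m x := by
  rw [curiousSum_eq_curiousSum_zero]
  refine IsPolyFun.eq_of_pascal (F := fun m x => curiousSum m x 0) (G := negTwoSum)
    (isPolyFun_shiftedChooseSum _ _) (isPolyFun_shiftedChooseSum _ _)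
    (shiftedChooseSum_succ_add_one _ _) (shiftedChooseSum_succ_add_one _ _) (fun n => ?_)
    (fun m => ?_) m x
  · simp [curiousSum, negTwoSum, shiftedChooseSum_zero, gchoose_zero_right]
  · rw [curiousSum_zero_zero, negTwoSum_zero_right]

theorem sun_curious_identity' (m : ℕ) (x y : ℝ) :
    (x + m + 2) *
        ∑ n ∈ Finset.range (m + 1),
          (-1 : ℝ) ^ n * gchoose (x + y + n) (m - n) * gchoose (y + 2 * n) n =
      2 * (∑ n ∈ Finset.range (m + 1), gchoose (x + n + 1) (m - n) * (-4 : ℝ) ^ n) +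
        (x - m) * gchoose x m := by
  rw [sum_eq_curiousSum, sum_eq_negFourSum, curiousSum_eq_negTwoSum]
  linear_combination -two_mul_negFourSum m x + (m + 1) * negTwoSum_succ m x +
    succ_mul_gchoose_succ x m
end

section
/- For every natural number m and all real numbers x and z, one has (x+(m+1)z) · [t^m]((1+t)^x/(1+t(z+1))) − z · [t^m]((1+t)^x/(1+t(z+1))^2) = (x-m) · C(x,m). -/
open Finset PowerSeries

/-! Expanding `1/(1+ct) = Σ (-c)^j t^j` and `1/(1+ct)^2 = Σ (j+1)(-c)^j t^j`, both coefficients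
become convolutions with `C(x,k)`. For `c = z + 1`, the recurrence `(k+1) C(x,k+1) = (x-k) C(x,k)`
turns the `k`-th summand of the combination into `f (k+1) - f k` with `f k = k C(x,k) (-c)^(m+1-k)`,
so the sum telescopes to `(m+1) C(x,m+1) = (x-m) C(x,m)`. -/

theorem gchoose_succ_mul (x : ℝ) (k : ℕ) :
    (k + 1 : ℝ) * gchoose x (k + 1) = (x - k) * gchoose x k := by
  have hk : (k.factorial : ℝ) ≠ 0 := by positivity
  simp only [gchoose, prod_range_succ, Nat.factorial_succ, Nat.cast_mul, Nat.cast_add,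
    Nat.cast_one]
  field_simp

namespace PowerSeries

variable {k : Type*} [Field k]

theorem mk_neg_pow_mul_one_add_C_mul_X (c : k) :
    (mk fun n => (-c) ^ n) * (1 + C c * X) = 1 := by
  ext (_ | n)
  · simp
  · rw [mul_add, mul_one, map_add, ← mul_assoc, coeff_succ_mul_X]
    simp [pow_succ]

theorem inv_one_add_C_mul_X (c : k) : (1 + C c * X)⁻¹ = mk fun n => (-c) ^ n :=
  (inv_eq_iff_mul_eq_one (by simp)).2 (mk_neg_pow_mul_one_add_C_mul_X c)

theorem inv_one_add_C_mul_X_sq (c : k) :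
    ((1 + C c * X) ^ 2)⁻¹ = mk fun n => (n + 1 : k) * (-c) ^ n := by
  rw [sq, PowerSeries.mul_inv_rev, inv_one_add_C_mul_X]
  ext n
  rw [coeff_mul, coeff_mk, sum_congr rfl fun ij hij => by
    rw [coeff_mk, coeff_mk, ← pow_add, mem_antidiagonal.1 hij]]
  simp

end PowerSeries

theorem coeff_binomSeries_mul (x : ℝ) (f : ℕ → ℝ) (m : ℕ) :
    coeff m (binomSeries x * mk f) = ∑ k ∈ range (m + 1), gchoose x k * f (m - k) := by
  simp [binomSeries, coeff_mul, Nat.sum_antidiagonal_eq_sum_range_succ_mk]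

theorem combination_summand_eq_sub {x z : ℝ} {k m : ℕ} (hkm : k ≤ m) :
    (x + (m + 1) * z) * (gchoose x k * (-(z + 1)) ^ (m - k)) -
        z * (gchoose x k * ((((m - k : ℕ) : ℝ) + 1) * (-(z + 1)) ^ (m - k))) =
      ((k + 1 : ℕ) : ℝ) * gchoose x (k + 1) * (-(z + 1)) ^ (m + 1 - (k + 1)) -
        k * gchoose x k * (-(z + 1)) ^ (m + 1 - k) := by
  rw [Nat.add_sub_add_right, Nat.sub_add_comm hkm, Nat.cast_succ, gchoose_succ_mul,
    Nat.cast_sub hkm, pow_succ]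
  ring

theorem coeff_combination (m : ℕ) (x z : ℝ) :
    (x + (m + 1) * z) *
          PowerSeries.coeff m
            (binomSeries x * (1 + PowerSeries.C (z + 1) * PowerSeries.X)⁻¹) -
        z * PowerSeries.coeff m
          (binomSeries x * ((1 + PowerSeries.C (z + 1) * PowerSeries.X) ^ 2)⁻¹) =
      (x - m) * gchoose x m := by
  rw [inv_one_add_C_mul_X, inv_one_add_C_mul_X_sq, coeff_binomSeries_mul,
    coeff_binomSeries_mul, mul_sum, mul_sum, ← sum_sub_distrib,
    sum_congr rfl fun k hk => combination_summand_eq_sub (Nat.lt_succ_iff.1 (mem_range.1 hk)),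
    sum_range_sub (fun k => (k : ℝ) * gchoose x k * (-(z + 1)) ^ (m + 1 - k))]
  simp only [Nat.cast_zero, zero_mul, sub_zero, Nat.sub_self, pow_zero, mul_one, Nat.cast_succ]
  exact gchoose_succ_mul x m
end
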